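/- Let D ⊂ A be a unital inclusion with nondegenerate conditional expectation E, GNS correspondence (X, φ_X, ξ_0), X° = X ⊖ ξ_0 D, 𝓑 the split extension associated with (D ⊂ A, E), and B = (1−e)𝓑(1−e). Then there exists an isometric linear map t° : X° → (1−e)𝓑e such that: t°(aξ_0) = ae = (1−e)ae for a ∈ A° = ker E; t°(ξ)* t°(η) = ⟨ξ, η⟩ e for ξ, η ∈ X°; and t°(bξd) = b t°(ξ) d for b ∈ B, ξ ∈ X°, d ∈ D. -/

import Mathlib

/-! ### Common interface definitions for C*-algebra theory -/

noncomputable section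

open scoped ENNReal NNReal

universe u v w

/-- An element of a *-algebra is *C*-positive* if it is of the form `star y * y`. -/
def IsCStarPos {A : Type*} [Mul A] [Star A] (x : A) : Prop := ∃ y : A, x = star y * y

/-- The canonical C*-norm of a matrix over a C*-algebra, computed via the action of the
matrix algebra on the Hilbert module `Aⁿ`. -/
def cstarMatNorm {A : Type*} [Norm A] [NonUnitalRing A] [Star A] {n : ℕ}
    (M : Matrix (Fin n) (Fin n) A) : ℝ :=
  sSup { r : ℝ | 0 ≤ r ∧ ∃ b : Fin n → A, ‖∑ i, star (b i) * b i‖ ≤ 1 ∧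
    r ^ 2 = ‖∑ i, star (∑ j, M i j * b j) * (∑ j, M i j * b j)‖ }

/-- A linear map between *-algebras is completely positive if all of its matrix
amplifications are positive; equivalently (as formulated here, avoiding norms on matrix
algebras), all sums `∑ᵢⱼ bᵢ* φ(aᵢ* aⱼ) bⱼ` are positive. -/
def IsCPMap {A B : Type*} [NonUnitalRing A] [Star A] [NonUnitalRing B] [Star B]
    [Module ℂ A] [Module ℂ B] (φ : A →ₗ[ℂ] B) : Prop :=
  ∀ (n : ℕ) (a : Fin n → A) (b : Fin n → B),
    IsCStarPos (∑ i, ∑ j, star (b i) * φ (star (a i) * a j) * b j)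

/-- A (bounded, completely positive, star-preserving) conditional expectation onto the
subalgebra `ι : D → A` of a unital C*-algebra `A`. -/
structure CondExp (D : Type u) (A : Type v) [CStarAlgebra D] [CStarAlgebra A]
    (ι : D →⋆ₐ[ℂ] A) : Type (max u v) where
  toMap : A →ₗ[ℂ] D
  map_star : ∀ a, toMap (star a) = star (toMap a)
  retract : ∀ d, toMap (ι d) = d
  bimod : ∀ (d : D) (a : A) (d' : D), toMap (ι d * a * ι d') = d * toMap a * d'
  cp : IsCPMap toMap
  contractive : ∀ a, ‖toMap a‖ ≤ ‖a‖

/-- Nondegeneracy (= faithfulness of the GNS representation) of a conditional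
expectation. -/
def CondExp.Nondeg {D : Type u} {A : Type v} [CStarAlgebra D] [CStarAlgebra A]
    {ι : D →⋆ₐ[ℂ] A} (E : CondExp D A ι) : Prop :=
  ∀ a : A, (∀ b : A, E.toMap (star (a * b) * (a * b)) = 0) → a = 0

/-- A subset of a unital C*-algebra generates it (as a C*-algebra) if the star subalgebra
it generates is dense. -/
def GeneratesCStar {A : Type*} [CStarAlgebra A] (S : Set A) : Prop :=
  Dense ((StarAlgebra.adjoin ℂ S : StarSubalgebra ℂ A) : Set A)

/-- A subset of a C*-algebra generates it as a non-unital C*-algebra if the non-unital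
star subalgebra it generates is dense. -/
def GeneratesCStarNU {A : Type*} [NonUnitalCStarAlgebra A] (S : Set A) : Prop :=
  Dense ((NonUnitalStarAlgebra.adjoin ℂ S : NonUnitalStarSubalgebra ℂ A) : Set A)

/-- The reduced amalgamated free product `(A, E) = *_D (A_k, E_k)` of a family of unital
inclusions `D ⊆ A k` with conditional expectations `E k`, realized on the C*-algebra
`FP`: it is generated by copies of the `A k` agreeing on `D`, carries a nondegenerate
conditional expectation `E` onto `D` restricting to the `E k` on each `A k`, and `E`
vanishes on all reduced words.  These properties determine `(FP, E)` up to isomorphism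
fixing the `A k`. -/
structure ReducedAFP {I : Type w} {D : Type u} [CStarAlgebra D] {A : I → Type u}
    [∀ i, CStarAlgebra (A i)] (ι : ∀ i, D →⋆ₐ[ℂ] A i) (Ek : ∀ i, CondExp D (A i) (ι i))
    (FP : Type u) [CStarAlgebra FP] : Type (max u w) where
  incl : ∀ i, A i →⋆ₐ[ℂ] FP
  incl_injective : ∀ i, Function.Injective (incl i)
  inclD : D →⋆ₐ[ℂ] FP
  compat : ∀ i d, incl i (ι i d) = inclD d
  generates : GeneratesCStar (⋃ i, Set.range (incl i))
  Exp : CondExp D FP inclD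
  Exp_restrict : ∀ i a, Exp.toMap (incl i a) = (Ek i).toMap a
  Exp_nondeg : Exp.Nondeg
  freeness : ∀ (m : ℕ) (idx : Fin (m + 1) → I) (a : ∀ k, A (idx k)),
    (∀ k, (Ek (idx k)).toMap (a k) = 0) →
    (∀ k : Fin m, idx k.castSucc ≠ idx k.succ) →
    Exp.toMap ((List.ofFn fun k => incl (idx k) (a k)).prod) = 0

/-- The canonical conditional expectation `E_{A_k} : A → A_k` of a reduced amalgamated
free product onto one of its free factors: it restricts to the identity on `A_k`, kills
all reduced words of length `≥ 2` as well as the length-one reduced words from the other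
factors, and satisfies `E = E_k ∘ E_{A_k}`. -/
structure FactorExp {I : Type w} {D : Type u} [CStarAlgebra D] {A : I → Type u}
    [∀ i, CStarAlgebra (A i)] {ι : ∀ i, D →⋆ₐ[ℂ] A i} {Ek : ∀ i, CondExp D (A i) (ι i)}
    {FP : Type u} [CStarAlgebra FP] (R : ReducedAFP ι Ek FP) (k : I) :
    Type (max u w) where
  toCondExp : CondExp (A k) FP (R.incl k)
  factors : ∀ x : FP, R.Exp.toMap x = (Ek k).toMap (toCondExp.toMap x)
  kills : ∀ (m : ℕ) (idx : Fin (m + 1) → I) (a : ∀ j, A (idx j)),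
    (∀ j, (Ek (idx j)).toMap (a j) = 0) →
    (∀ j : Fin m, idx j.castSucc ≠ idx j.succ) → (1 ≤ m ∨ idx 0 ≠ k) →
    toCondExp.toMap ((List.ofFn fun j => R.incl (idx j) (a j)).prod) = 0

/-- The Bass–Serre algebra `ΔT(A, E)` of a reduced amalgamated free product `R`,
characterized by its universal property (Corollary 4.4 of the paper): it contains the
reduced amalgamated free product `FP` faithfully, carries pairwise orthogonal projections
`P k` (summing to `1` when `I` is finite) whose complements `e_k = 1 - P k` satisfy the
Jones relation `e_k a e_k = E_k(a) e_k` for `a ∈ A_k`, it is generated by `FP` together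
with the `P k`, and it is universal for these relations. -/
structure BassSerre {I : Type w} {D : Type u} [CStarAlgebra D] {A : I → Type u}
    [∀ i, CStarAlgebra (A i)] {ι : ∀ i, D →⋆ₐ[ℂ] A i} {Ek : ∀ i, CondExp D (A i) (ι i)}
    {FP : Type u} [CStarAlgebra FP] (R : ReducedAFP ι Ek FP)
    (Δ : Type u) [CStarAlgebra Δ] : Type (max (u + 1) w) where
  emb : FP →⋆ₐ[ℂ] Δ
  emb_injective : Function.Injective emb
  P : I → Δ
  P_sa : ∀ i, star (P i) = P i
  P_idem : ∀ i, P i * P i = P i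
  P_orth : ∀ i j, i ≠ j → P i * P j = 0
  P_sum : ∀ s : Finset I, (∀ i, i ∈ s) → ∑ i ∈ s, P i = 1
  jones : ∀ i (a : A i),
    (1 - P i) * emb (R.incl i a) * (1 - P i) = emb (R.inclD ((Ek i).toMap a)) * (1 - P i)
  generates : GeneratesCStar (Set.range emb ∪ Set.range P)
  universal : ∀ (C : Type u) [CStarAlgebra C] (ψ : ∀ i, A i →⋆ₐ[ℂ] C),
    (∀ i j d, ψ i (ι i d) = ψ j (ι j d)) → ∀ q : I → C,
    (∀ i, star (q i) = q i) → (∀ i, q i * q i = q i) → (∀ i j, i ≠ j → q i * q j = 0) →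
    (∀ s : Finset I, (∀ i, i ∈ s) → ∑ i ∈ s, q i = 1) →
    (∀ i a, (1 - q i) * ψ i a * (1 - q i) = ψ i (ι i ((Ek i).toMap a)) * (1 - q i)) →
    ∃! ρ : Δ →⋆ₐ[ℂ] C, (∀ i a, ρ (emb (R.incl i a)) = ψ i a) ∧ ∀ i, ρ (P i) = q i

/-- Nuclearity of a C*-algebra: the identity map is a pointwise-norm limit of
compositions of completely positive contractions through matrix algebras. -/
def IsNuclearCStar (A : Type u) [NonUnitalCStarAlgebra A] : Prop :=
  ∀ (F : Finset A) (ε : ℝ), 0 < ε → ∃ (n : ℕ) (φ : A →ₗ[ℂ] Matrix (Fin n) (Fin n) ℂ)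
    (ψ : Matrix (Fin n) (Fin n) ℂ →ₗ[ℂ] A), IsCPMap φ ∧ IsCPMap ψ ∧
    (∀ a, cstarMatNorm (φ a) ≤ ‖a‖) ∧ (∀ M, ‖ψ M‖ ≤ cstarMatNorm M) ∧
    ∀ a ∈ F, ‖ψ (φ a) - a‖ ≤ ε

/-- A nuclear embedding of a C*-algebra into another C*-algebra: an injective
*-homomorphism which is a pointwise-norm limit of completely positive contractions
factoring through matrix algebras.  By Kirchberg's theorem, a C*-algebra admits such
an embedding if and only if it is exact. -/
structure NuclearEmbedding (A : Type u) [NonUnitalCStarAlgebra A] : Type (u + 1) where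
  B : Type u
  [instB : NonUnitalCStarAlgebra B]
  θ : A →⋆ₙₐ[ℂ] B
  injective : Function.Injective θ
  nuclear : ∀ (F : Finset A) (ε : ℝ), 0 < ε → ∃ (n : ℕ)
    (φ : A →ₗ[ℂ] Matrix (Fin n) (Fin n) ℂ) (ψ : Matrix (Fin n) (Fin n) ℂ →ₗ[ℂ] B),
    IsCPMap φ ∧ IsCPMap ψ ∧ (∀ a, cstarMatNorm (φ a) ≤ ‖a‖) ∧
    (∀ M, ‖ψ M‖ ≤ cstarMatNorm M) ∧ ∀ a ∈ F, ‖ψ (φ a) - θ a‖ ≤ ε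

/-- Exactness of a C*-algebra, in the form of Kirchberg's nuclear-embeddability
characterization. -/
def IsExactCStar (A : Type u) [NonUnitalCStarAlgebra A] : Prop :=
  Nonempty (NuclearEmbedding A)

/-- `A` has the completely bounded approximation property with constant `C`: the
identity is a pointwise-norm limit of finite-rank maps which are completely bounded
with cb-norm at most `C`. -/
def CBAPBound (A : Type u) [NonUnitalCStarAlgebra A] (C : ℝ) : Prop :=
  ∀ (F : Finset A) (ε : ℝ), 0 < ε → ∃ φ : A →ₗ[ℂ] A,
    FiniteDimensional ℂ (LinearMap.range φ) ∧
    (∀ (n : ℕ) (M : Matrix (Fin n) (Fin n) A),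
      cstarMatNorm (M.map φ) ≤ C * cstarMatNorm M) ∧
    ∀ a ∈ F, ‖φ a - a‖ ≤ ε

/-- The Haagerup constant `Λ_cb(A)` of a C*-algebra (`∞` if `A` fails the CBAP). -/
def LambdaCB (A : Type u) [NonUnitalCStarAlgebra A] : ℝ≥0∞ :=
  sInf {c : ℝ≥0∞ | ∃ r : ℝ≥0, c = (r : ℝ≥0∞) ∧ CBAPBound A (r : ℝ)}

end


/-! ### Hilbert C*-modules (interface) -/

noncomputable section

universe u v w

/-- Interface for a Hilbert C*-module structure over the C*-algebra `D` on the complex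
Banach space `X`: a right `D`-action and a `D`-valued inner product, compatible with the
norm of `X`. -/
structure HilbMod (D : Type u) [CStarAlgebra D] (X : Type v) [NormedAddCommGroup X]
    [NormedSpace ℂ X] [CompleteSpace X] : Type (max u v) where
  rsmul : X →ₗ[ℂ] D →ₗ[ℂ] X
  inner : X → X → D
  inner_add_right : ∀ x y z, inner x (y + z) = inner x y + inner x z
  inner_smul_right : ∀ (c : ℂ) (x y : X), inner x (c • y) = c • inner x y
  inner_rsmul_right : ∀ x y d, inner x (rsmul y d) = inner x y * d
  star_inner : ∀ x y, star (inner x y) = inner y x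
  inner_pos : ∀ x, IsCStarPos (inner x x)
  norm_inner : ∀ x, ‖x‖ ^ 2 = ‖inner x x‖
  rsmul_assoc : ∀ x d e, rsmul (rsmul x d) e = rsmul x (d * e)
  rankOne_exists : ∀ ξ η : X, ∃ T : X →L[ℂ] X, ∀ ζ, T ζ = rsmul ξ (inner η ζ)

namespace HilbMod

variable {D : Type u} [CStarAlgebra D] {X : Type v} [NormedAddCommGroup X]
  [NormedSpace ℂ X] [CompleteSpace X] {Y : Type w} [NormedAddCommGroup Y]
  [NormedSpace ℂ Y] [CompleteSpace Y]

/-- An operator between Hilbert C*-modules is adjointable if it has an adjoint with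
respect to the inner products. -/
def AdjointablePair (MX : HilbMod D X) (MY : HilbMod D Y) (T : X →L[ℂ] Y) : Prop :=
  ∃ S : Y →L[ℂ] X, ∀ x y, MY.inner (T x) y = MX.inner x (S y)

/-- Adjointable operators on a Hilbert C*-module. -/
def Adjointable (M : HilbMod D X) (T : X →L[ℂ] X) : Prop := AdjointablePair M M T

/-- The adjoint of an (adjointable) operator. -/
def adj (M : HilbMod D X) (T : X →L[ℂ] X) : X →L[ℂ] X :=
  letI := Classical.propDecidable (M.Adjointable T)
  if h : M.Adjointable T then h.choose else 0

/-- "Rank-one" operators `θ_{ξ,η} : ζ ↦ ξ ⬝ ⟨η, ζ⟩` between Hilbert C*-modules.-/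
def IsRankOnePair (MX : HilbMod D X) (MY : HilbMod D Y) (T : X →L[ℂ] Y) : Prop :=
  ∃ (ξ : Y) (η : X), ∀ ζ, T ζ = MY.rsmul ξ (MX.inner η ζ)

/-- Compact operators between Hilbert C*-modules: norm limits of sums of rank-one
operators. -/
def IsCompactPair (MX : HilbMod D X) (MY : HilbMod D Y) (T : X →L[ℂ] Y) : Prop :=
  T ∈ closure
    ((Submodule.span ℂ {S : X →L[ℂ] Y | IsRankOnePair MX MY S} : Submodule ℂ _) : Set _)

/-- Compact operators on a Hilbert C*-module. -/
def IsCompactOp (M : HilbMod D X) (T : X →L[ℂ] X) : Prop := IsCompactPair M M T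

end HilbMod

/-- A representation of the C*-algebra `A` by adjointable operators on a Hilbert
C*-module (not necessarily unital). -/
structure RepOn (A : Type w) [NonUnitalCStarAlgebra A] {D : Type u} [CStarAlgebra D]
    {X : Type v} [NormedAddCommGroup X] [NormedSpace ℂ X] [CompleteSpace X]
    (M : HilbMod D X) : Type (max u v w) where
  act : A →ₗ[ℂ] X →L[ℂ] X
  act_mul : ∀ a b, act (a * b) = (act a).comp (act b)
  act_star : ∀ (a : A) (x y : X), M.inner (act a x) y = M.inner x (act (star a) y)
  act_rsmul : ∀ (a : A) (x : X) (d : D), act a (M.rsmul x d) = M.rsmul (act a x) d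

/-- A unital representation. -/
def RepOn.Unital {A : Type w} [CStarAlgebra A] {D : Type u} [CStarAlgebra D] {X : Type v}
    [NormedAddCommGroup X] [NormedSpace ℂ X] [CompleteSpace X] {M : HilbMod D X}
    (π : RepOn A M) : Prop := π.act 1 = ContinuousLinearMap.id ℂ X

/-- Faithfulness (injectivity) of a representation. -/
def RepOn.Faithful {A : Type w} [NonUnitalCStarAlgebra A] {D : Type u} [CStarAlgebra D]
    {X : Type v} [NormedAddCommGroup X] [NormedSpace ℂ X] [CompleteSpace X]
    {M : HilbMod D X} (π : RepOn A M) : Prop := ∀ a, π.act a = 0 → a = 0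

end


/-! ### GNS representations of conditional expectations (interface) -/

noncomputable section

universe u v w

/-- The GNS representation `(X, φ_X, ξ₀)` of a conditional expectation `E : A → D`:
a Hilbert `D`-module `X` with a unital representation of `A` and a cyclic vector `ξ₀`
implementing `E`, together with the Jones projection `e_D : x ↦ ξ₀ ⬝ ⟨ξ₀, x⟩`. -/
structure GNSRep {D : Type u} {A : Type w} [CStarAlgebra D] [CStarAlgebra A]
    (ι : D →⋆ₐ[ℂ] A) (E : CondExp D A ι) (X : Type v) [NormedAddCommGroup X]
    [NormedSpace ℂ X] [CompleteSpace X] : Type (max u v w) where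
  mod : HilbMod D X
  rep : RepOn A mod
  rep_unital : rep.Unital
  cyc : X
  cyclic : Dense (Set.range fun a : A => rep.act a cyc)
  inner_cyc : ∀ a b : A, mod.inner (rep.act a cyc) (rep.act b cyc) = E.toMap (star a * b)
  cyc_rsmul : ∀ d : D, mod.rsmul cyc d = rep.act (ι d) cyc
  jones : X →L[ℂ] X
  jones_apply : ∀ x, jones x = mod.rsmul cyc (mod.inner cyc x)

namespace GNSRep

variable {D : Type u} {A : Type w} [CStarAlgebra D] [CStarAlgebra A] {ι : D →⋆ₐ[ℂ] A}
  {E : CondExp D A ι} {X : Type v} [NormedAddCommGroup X] [NormedSpace ℂ X]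
  [CompleteSpace X]

/-- The orthogonal complement `X° = X ⊖ ξ₀D` of the cyclic submodule. -/
def XcircSet (G : GNSRep ι E X) : Set X := {x | G.mod.inner G.cyc x = 0}

/-- Rank-one operators with both legs in `X°`. -/
def IsRankOneCirc (G : GNSRep ι E X) (T : X →L[ℂ] X) : Prop :=
  ∃ ξ ∈ G.XcircSet, ∃ η ∈ G.XcircSet, ∀ ζ, T ζ = G.mod.rsmul ξ (G.mod.inner η ζ)

/-- The compact operators `K(X°) ⊆ K(X)`, i.e. limits of sums of rank-one operators
with legs in `X°`. -/
def IsCompactCirc (G : GNSRep ι E X) (T : X →L[ℂ] X) : Prop :=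
  T ∈ closure
    ((Submodule.span ℂ {S : X →L[ℂ] X | G.IsRankOneCirc S} : Submodule ℂ _) : Set _)

end GNSRep

end


/-! ### Statement 4

For the split extension `𝓑 = C*(A, e_D) ⊆ A ⊕ L(X)` associated with `(D ⊆ A, E)` and
`B = (1-e)𝓑(1-e)`, there is an isometric linear map `t° : X° → (1-e)𝓑e` with
`t°(aξ₀) = ae = (1-e)ae` for `a ∈ A°`, `t°(ξ)* t°(η) = ⟨ξ,η⟩e`, and
`t°(bξd) = b t°(ξ) d` for `b ∈ B`, `ξ ∈ X°`, `d ∈ D`. -/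

noncomputable section

universe u v

namespace Stmt4

variable {D A : Type u} [CStarAlgebra D] [CStarAlgebra A] {ι : D →⋆ₐ[ℂ] A}
  {E : CondExp D A ι} {X : Type v} [NormedAddCommGroup X] [NormedSpace ℂ X]
  [CompleteSpace X]

/-- The copy of `a ∈ A` inside `A ⊕ L(X)`. -/
def aElem (G : GNSRep ι E X) (a : A) : A × (X →L[ℂ] X) := (a, G.rep.act a)

/-- The Jones projection `e = 0 ⊕ e_D` inside `A ⊕ L(X)`. -/
def eElem (G : GNSRep ι E X) : A × (X →L[ℂ] X) := (0, G.jones)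

/-- The copy of `d ∈ D` inside `A ⊕ L(X)`. -/
def dElem (G : GNSRep ι E X) (d : D) : A × (X →L[ℂ] X) := aElem G (ι d)

/-- The adjoint operation on `A ⊕ L(X)`. -/
def pstar (G : GNSRep ι E X) (p : A × (X →L[ℂ] X)) : A × (X →L[ℂ] X) :=
  (star p.1, G.mod.adj p.2)

/-- The split extension `𝓑 = C*({a ⊕ φ_X(a)}, 0 ⊕ e_D) ⊆ A ⊕ L(X)`. -/
def calB (G : GNSRep ι E X) : Set (A × (X →L[ℂ] X)) :=
  closure ((Algebra.adjoin ℂ (Set.range (aElem G) ∪ {eElem G}) :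
    Subalgebra ℂ (A × (X →L[ℂ] X))) : Set _)

/-- The semisplit extension `B = (1-e) 𝓑 (1-e)`. -/
def Bset (G : GNSRep ι E X) : Set (A × (X →L[ℂ] X)) :=
  {p | ∃ z ∈ calB G, p = (1 - eElem G) * z * (1 - eElem G)}

/-- The submodule `X° = X ⊖ ξ₀D`. -/
def Xc (G : GNSRep ι E X) : Submodule ℂ X where
  carrier := {x | G.mod.inner G.cyc x = 0}
  add_mem' := by
    intro a b ha hb
    have h := G.mod.inner_add_right G.cyc a b
    simp only [Set.mem_setOf_eq] at *
    rw [h, ha, hb, add_zero]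
  zero_mem' := by
    have h := G.mod.inner_add_right G.cyc 0 0
    rw [add_zero] at h
    exact (left_eq_add.mp h)
  smul_mem' := by
    intro c x hx
    have h := G.mod.inner_smul_right c G.cyc x
    simp only [Set.mem_setOf_eq] at *
    rw [h, hx, smul_zero]

end Stmt4


/-!
The map is `t°(ξ) = 0 ⊕ θ_{ξ,ξ₀}`, where `θ_{ξ,η} ζ = ξ ⟨η, ζ⟩`. Since `⟨ξ₀, ξ₀⟩ = 1`, Cauchy–Schwarz
makes `ξ ↦ θ_{ξ,ξ₀}` isometric. For `a ∈ A` one has `a e = 0 ⊕ θ_{aξ₀,ξ₀}`, so by cyclicity of `ξ₀`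
and continuity every `0 ⊕ θ_{ξ,ξ₀}` lies in `𝓑`; for `ξ ∈ X°` it is fixed by `(1 - e) · e`.
The remaining identities are computations with rank-one operators, using that every element of
`𝓑` acts right `D`-linearly on `X`, a closed condition satisfied by the generators.
-/

namespace HilbMod

variable {D : Type u} [CStarAlgebra D] {X : Type v} [NormedAddCommGroup X]
  [NormedSpace ℂ X] [CompleteSpace X] (M : HilbMod D X)

def innerRight (x : X) : X →ₗ[ℂ] D where
  toFun := M.inner x
  map_add' := M.inner_add_right x
  map_smul' c := M.inner_smul_right c x

lemma inner_sub_right (x y z : X) : M.inner x (y - z) = M.inner x y - M.inner x z :=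
  (M.innerRight x).map_sub y z

lemma inner_add_left (x y z : X) : M.inner (x + y) z = M.inner x z + M.inner y z := by
  rw [← M.star_inner, M.inner_add_right, star_add, M.star_inner, M.star_inner]

lemma inner_rsmul_left (x y : X) (d : D) :
    M.inner (M.rsmul x d) y = star d * M.inner x y := by
  rw [← M.star_inner, M.inner_rsmul_right, star_mul, M.star_inner]

lemma eq_of_forall_inner_eq {x y : X} (h : ∀ z, M.inner z x = M.inner z y) : x = y := by
  have hnorm := M.norm_inner (x - y)
  rw [M.inner_sub_right, h, sub_self, norm_zero, sq_eq_zero_iff, norm_eq_zero] at hnorm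
  exact sub_eq_zero.mp hnorm

lemma norm_rsmul_le (x : X) (d : D) : ‖M.rsmul x d‖ ≤ ‖x‖ * ‖d‖ := by
  refine le_of_sq_le_sq ?_ (by positivity)
  calc ‖M.rsmul x d‖ ^ 2 = ‖star d * M.inner x x * d‖ := by
        rw [M.norm_inner, M.inner_rsmul_right, M.inner_rsmul_left]
    _ ≤ ‖star d‖ * ‖M.inner x x‖ * ‖d‖ := norm_mul₃_le
    _ = (‖x‖ * ‖d‖) ^ 2 := by rw [norm_star, ← M.norm_inner]; ring

lemma continuous_rsmul_left (d : D) : Continuous fun x => M.rsmul x d :=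
  AddMonoidHomClass.continuous_of_bound (M.rsmul.flip d) ‖d‖ fun x => by
    simpa [mul_comm] using M.norm_rsmul_le x d

lemma rsmul_one (x : X) : M.rsmul x 1 = x :=
  M.eq_of_forall_inner_eq fun z => by rw [M.inner_rsmul_right, mul_one]

/-- Cauchy–Schwarz against a unit vector: `ζ` splits orthogonally as
`x₀ ⟨x₀, ζ⟩ + w`, so `⟨x₀, ζ⟩* ⟨x₀, ζ⟩ ≤ ⟨ζ, ζ⟩`. -/
lemma norm_inner_le_of_inner_self_eq_one {x₀ : X} (h : M.inner x₀ x₀ = 1) (ζ : X) :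
    ‖M.inner x₀ ζ‖ ≤ ‖ζ‖ := by
  let := CStarAlgebra.spectralOrder D
  have := CStarAlgebra.spectralOrderedRing D
  set d := M.inner x₀ ζ
  set w := ζ - M.rsmul x₀ d
  have hw : M.inner w (M.rsmul x₀ d) = 0 := by
    rw [M.inner_rsmul_right, ← M.star_inner, M.inner_sub_right, M.inner_rsmul_right, h,
      one_mul, sub_self, star_zero, zero_mul]
  have hw' : M.inner (M.rsmul x₀ d) w = 0 := by rw [← M.star_inner, hw, star_zero]
  have hsplit : M.inner ζ ζ = M.inner w w + star d * d := by
    have hζ : ζ = w + M.rsmul x₀ d := (sub_add_cancel _ _).symm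
    rw [hζ, M.inner_add_left, M.inner_add_right, M.inner_add_right, hw, hw',
      M.inner_rsmul_right, M.inner_rsmul_left, h, mul_one, add_zero, zero_add]
  have hle : star d * d ≤ M.inner ζ ζ := by
    obtain ⟨y, hy⟩ := M.inner_pos w
    rw [hsplit, hy]
    exact le_add_of_nonneg_left (star_mul_self_nonneg y)
  have hsq : ‖d‖ ^ 2 ≤ ‖ζ‖ ^ 2 := by
    rw [sq, ← CStarRing.norm_star_mul_self, M.norm_inner]
    exact CStarAlgebra.norm_le_norm_of_nonneg_of_le (star_mul_self_nonneg d) hle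
  exact le_of_sq_le_sq (by simpa using hsq) (norm_nonneg ζ)

lemma norm_le_one_of_inner_self_eq_one {x₀ : X} (h : M.inner x₀ x₀ = 1) : ‖x₀‖ ≤ 1 := by
  have hsq : ‖x₀‖ ^ 2 ≤ ‖x₀‖ := by
    rw [M.norm_inner, h, ← h]
    exact M.norm_inner_le_of_inner_self_eq_one h x₀
  nlinarith [norm_nonneg x₀]

def rankOne (ξ η : X) : X →L[ℂ] X := (M.rankOne_exists ξ η).choose

lemma rankOne_apply (ξ η ζ : X) : M.rankOne ξ η ζ = M.rsmul ξ (M.inner η ζ) :=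
  (M.rankOne_exists ξ η).choose_spec ζ

lemma adj_eq_of_forall_inner {T S : X →L[ℂ] X} (h : ∀ x y, M.inner (T x) y = M.inner x (S y)) :
    M.adj T = S := by
  have hT : M.Adjointable T := ⟨S, h⟩
  rw [adj, dif_pos hT]
  ext y
  exact M.eq_of_forall_inner_eq fun z => by rw [← hT.choose_spec, h]

lemma adj_rankOne (ξ η : X) : M.adj (M.rankOne ξ η) = M.rankOne η ξ :=
  M.adj_eq_of_forall_inner fun x y => by
    rw [rankOne_apply, rankOne_apply, inner_rsmul_left, M.star_inner, M.inner_rsmul_right]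

def rankOneLeft (η : X) : X →ₗ[ℂ] X →L[ℂ] X where
  toFun ξ := M.rankOne ξ η
  map_add' ξ ξ' := by ext ζ; simp [rankOne_apply]
  map_smul' c ξ := by ext ζ; simp [rankOne_apply]

lemma norm_rankOne_of_inner_self_eq_one {x₀ : X} (h : M.inner x₀ x₀ = 1) (ξ : X) :
    ‖M.rankOne ξ x₀‖ = ‖ξ‖ := by
  refine le_antisymm (ContinuousLinearMap.opNorm_le_bound _ (norm_nonneg ξ) fun ζ => ?_) ?_
  · rw [rankOne_apply]
    exact (M.norm_rsmul_le _ _).trans (mul_le_mul_of_nonneg_left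
      (M.norm_inner_le_of_inner_self_eq_one h ζ) (norm_nonneg ξ))
  · calc ‖ξ‖ = ‖M.rankOne ξ x₀ x₀‖ := by rw [rankOne_apply, h, rsmul_one]
      _ ≤ ‖M.rankOne ξ x₀‖ * ‖x₀‖ := (M.rankOne ξ x₀).le_opNorm x₀
      _ ≤ ‖M.rankOne ξ x₀‖ := mul_le_of_le_one_right (norm_nonneg _)
          (M.norm_le_one_of_inner_self_eq_one h)

def rightLinear : Subalgebra ℂ (X →L[ℂ] X) where
  carrier := {T | ∀ x d, T (M.rsmul x d) = M.rsmul (T x) d}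
  mul_mem' {S T} hS hT x d := by
    change S (T _) = M.rsmul (S (T x)) d
    rw [hT x d, hS]
  add_mem' {S T} hS hT x d := by
    change S _ + T _ = M.rsmul (S x + T x) d
    rw [hS x d, hT x d, map_add, LinearMap.add_apply]
  algebraMap_mem' c x d := by simp [Algebra.algebraMap_eq_smul_one]

lemma isClosed_rightLinear : IsClosed (M.rightLinear : Set (X →L[ℂ] X)) := by
  have : (M.rightLinear : Set (X →L[ℂ] X)) =
      ⋂ (x : X) (d : D), {T | T (M.rsmul x d) = M.rsmul (T x) d} := by
    ext T; simp [rightLinear]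
  rw [this]
  exact isClosed_iInter fun x => isClosed_iInter fun d =>
    isClosed_eq (continuous_eval_const _)
      ((M.continuous_rsmul_left d).comp (continuous_eval_const x))

end HilbMod

namespace GNSRep

variable {D A : Type u} [CStarAlgebra D] [CStarAlgebra A] {ι : D →⋆ₐ[ℂ] A}
  {E : CondExp D A ι} {X : Type v} [NormedAddCommGroup X] [NormedSpace ℂ X]
  [CompleteSpace X] (G : GNSRep ι E X)

lemma act_one_apply (x : X) : G.rep.act 1 x = x := by
  rw [show G.rep.act 1 = ContinuousLinearMap.id ℂ X from G.rep_unital]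
  rfl

lemma inner_cyc_act (a : A) : G.mod.inner G.cyc (G.rep.act a G.cyc) = E.toMap a := by
  simpa [G.act_one_apply] using G.inner_cyc 1 a

lemma inner_cyc_self : G.mod.inner G.cyc G.cyc = 1 := by
  simpa [G.act_one_apply] using (G.inner_cyc_act 1).trans (by simpa using E.retract 1)

/-- `φ_X(ι d)` is adjoint to `φ_X(ι d*)`, which acts on `ξ₀` as right multiplication by `d*`. -/
lemma inner_cyc_act_apply (d : D) (x : X) :
    G.mod.inner G.cyc (G.rep.act (ι d) x) = d * G.mod.inner G.cyc x := by
  have h := G.rep.act_star (ι (star d)) G.cyc x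
  rw [← map_star, star_star] at h
  rw [← h, ← G.cyc_rsmul, G.mod.inner_rsmul_left, star_star]

lemma jones_rsmul (x : X) (d : D) :
    G.jones (G.mod.rsmul x d) = G.mod.rsmul (G.jones x) d := by
  rw [G.jones_apply, G.jones_apply, G.mod.inner_rsmul_right, G.mod.rsmul_assoc]

end GNSRep

namespace Stmt4

variable {D A : Type u} [CStarAlgebra D] [CStarAlgebra A] {ι : D →⋆ₐ[ℂ] A}
  {E : CondExp D A ι} {X : Type v} [NormedAddCommGroup X] [NormedSpace ℂ X]
  [CompleteSpace X] (G : GNSRep ι E X)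

def tLin : X →ₗ[ℂ] A × (X →L[ℂ] X) :=
  (LinearMap.inr ℂ A (X →L[ℂ] X)).comp (G.mod.rankOneLeft G.cyc)

lemma tLin_apply (ξ : X) : tLin G ξ = (0, G.mod.rankOne ξ G.cyc) := rfl

lemma norm_tLin (ξ : X) : ‖tLin G ξ‖ = ‖ξ‖ := by
  rw [tLin_apply, Prod.norm_mk, norm_zero,
    G.mod.norm_rankOne_of_inner_self_eq_one G.inner_cyc_self, max_eq_right (norm_nonneg ξ)]

lemma continuous_tLin : Continuous (tLin G) :=
  AddMonoidHomClass.continuous_of_bound (tLin G) 1 fun ξ => by rw [norm_tLin, one_mul]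

lemma aElem_mul_eElem (a : A) : aElem G a * eElem G = tLin G (G.rep.act a G.cyc) := by
  refine Prod.ext (by simp [aElem, eElem, tLin_apply]) (ContinuousLinearMap.ext fun ζ => ?_)
  simp [aElem, eElem, tLin_apply, mul_apply_eq_comp, G.jones_apply, G.rep.act_rsmul,
    HilbMod.rankOne_apply]

lemma tLin_mul_eElem (ξ : X) : tLin G ξ * eElem G = tLin G ξ := by
  refine Prod.ext (by simp [eElem, tLin_apply]) (ContinuousLinearMap.ext fun ζ => ?_)
  simp [eElem, tLin_apply, mul_apply_eq_comp, G.jones_apply, HilbMod.rankOne_apply,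
    G.mod.inner_rsmul_right, G.inner_cyc_self]

lemma eElem_mul_tLin (ξ : X) : eElem G * tLin G ξ = tLin G (G.jones ξ) := by
  refine Prod.ext (by simp [eElem, tLin_apply]) (ContinuousLinearMap.ext fun ζ => ?_)
  simp [eElem, tLin_apply, mul_apply_eq_comp, HilbMod.rankOne_apply, G.jones_rsmul]

lemma one_sub_eElem_mul_tLin {ξ : X} (hξ : ξ ∈ Xc G) :
    (1 - eElem G) * tLin G ξ = tLin G ξ := by
  have hjones : G.jones ξ = 0 := by
    rw [G.jones_apply, show G.mod.inner G.cyc ξ = 0 from hξ, map_zero]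
  rw [sub_mul, one_mul, eElem_mul_tLin, hjones, map_zero, sub_zero]

lemma one_sub_eElem_mul_tLin_mul_eElem {ξ : X} (hξ : ξ ∈ Xc G) :
    (1 - eElem G) * tLin G ξ * eElem G = tLin G ξ := by
  rw [mul_assoc, tLin_mul_eElem, one_sub_eElem_mul_tLin G hξ]

lemma tLin_mem_calB (ξ : X) : tLin G ξ ∈ calB G := by
  have hclosed : IsClosed {x : X | tLin G x ∈ calB G} :=
    isClosed_closure.preimage (continuous_tLin G)
  have hrange : Set.range (fun a : A => G.rep.act a G.cyc) ⊆ {x : X | tLin G x ∈ calB G} := by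
    rintro _ ⟨a, rfl⟩
    change tLin G _ ∈ calB G
    rw [← aElem_mul_eElem]
    exact subset_closure (mul_mem (Algebra.subset_adjoin (Or.inl ⟨a, rfl⟩))
      (Algebra.subset_adjoin (Or.inr rfl)))
  exact hclosed.closure_subset_iff.mpr hrange (G.cyclic.closure_eq ▸ Set.mem_univ ξ)

lemma pstar_tLin_mul_tLin (ξ η : X) :
    pstar G (tLin G ξ) * tLin G η = dElem G (G.mod.inner ξ η) * eElem G := by
  refine Prod.ext (by simp [pstar, dElem, aElem, eElem, tLin_apply])
    (ContinuousLinearMap.ext fun ζ => ?_)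
  simp [pstar, dElem, aElem, eElem, tLin_apply, mul_apply_eq_comp, HilbMod.adj_rankOne,
    HilbMod.rankOne_apply, G.mod.inner_rsmul_right, G.jones_apply, G.rep.act_rsmul,
    ← G.cyc_rsmul, G.mod.rsmul_assoc]

lemma snd_mem_rightLinear_of_mem_calB {z : A × (X →L[ℂ] X)} (hz : z ∈ calB G) :
    z.2 ∈ G.mod.rightLinear := by
  let S := G.mod.rightLinear.comap (AlgHom.snd ℂ A (X →L[ℂ] X))
  have hS : IsClosed (S : Set (A × (X →L[ℂ] X))) :=
    G.mod.isClosed_rightLinear.preimage continuous_snd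
  have hgen : Algebra.adjoin ℂ (Set.range (aElem G) ∪ {eElem G}) ≤ S := by
    refine Algebra.adjoin_le ?_
    rintro _ (⟨a, rfl⟩ | rfl)
    · exact G.rep.act_rsmul a
    · exact G.jones_rsmul
  exact closure_minimal hgen hS hz

lemma snd_mem_rightLinear_of_mem_Bset {b : A × (X →L[ℂ] X)} (hb : b ∈ Bset G) :
    b.2 ∈ G.mod.rightLinear := by
  obtain ⟨z, hz, rfl⟩ := hb
  have he : (1 - eElem G).2 ∈ G.mod.rightLinear :=
    snd_mem_rightLinear_of_mem_calB G
      (subset_closure (sub_mem (one_mem _) (Algebra.subset_adjoin (Or.inr rfl))))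
  exact mul_mem (mul_mem he (snd_mem_rightLinear_of_mem_calB G hz)) he

lemma mul_tLin_mul_dElem {b : A × (X →L[ℂ] X)} (hb : b.2 ∈ G.mod.rightLinear) (ξ : X)
    (d : D) : b * tLin G ξ * dElem G d = tLin G (G.mod.rsmul (b.2 ξ) d) := by
  refine Prod.ext (by simp [dElem, aElem, tLin_apply]) (ContinuousLinearMap.ext fun ζ => ?_)
  simp only [dElem, aElem, tLin_apply, Prod.snd_mul, mul_apply_eq_comp,
    HilbMod.rankOne_apply, G.inner_cyc_act_apply, ← G.mod.rsmul_assoc]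
  rw [hb, hb]

def tc : Xc G →ₗ[ℂ] A × (X →L[ℂ] X) := (tLin G).comp (Xc G).subtype

end Stmt4

open Stmt4

theorem stmt_4_general {D A : Type u} [CStarAlgebra D] [CStarAlgebra A] (ι : D →⋆ₐ[ℂ] A)
    (E : CondExp D A ι)
    (X : Type v) [NormedAddCommGroup X] [NormedSpace ℂ X] [CompleteSpace X]
    (G : GNSRep ι E X) :
    ∃ tc : Xc G →ₗ[ℂ] A × (X →L[ℂ] X),
      -- `t°` is isometric
      (∀ ξ : Xc G, ‖tc ξ‖ = ‖(ξ : X)‖) ∧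
      -- `t°` maps into `(1-e)𝓑e`
      (∀ ξ : Xc G, ∃ z ∈ calB G, tc ξ = (1 - eElem G) * z * eElem G) ∧
      -- `t°(aξ₀) = ae = (1-e)ae` for `a ∈ A° = ker E`
      (∀ (a : A), E.toMap a = 0 → ∀ ξ : Xc G, (ξ : X) = G.rep.act a G.cyc →
        tc ξ = aElem G a * eElem G ∧
        tc ξ = (1 - eElem G) * aElem G a * eElem G) ∧
      -- `t°(ξ)* t°(η) = ⟨ξ, η⟩ e`
      (∀ ξ η : Xc G,
        pstar G (tc ξ) * tc η = dElem G (G.mod.inner (ξ : X) (η : X)) * eElem G) ∧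
      -- `t°(b ξ d) = b t°(ξ) d` for `b ∈ B` (acting on `X°` via `A ⊕ L(X°) → L(X°)`)
      (∀ b ∈ Bset G, ∀ (ξ ζ : Xc G) (d : D),
        (ζ : X) = G.mod.rsmul (b.2 (ξ : X)) d → tc ζ = b * tc ξ * dElem G d) := by
  refine ⟨tc G, fun ξ => norm_tLin G ξ,
    fun ξ => ⟨tLin G ξ, tLin_mem_calB G ξ, (one_sub_eElem_mul_tLin_mul_eElem G ξ.2).symm⟩,
    fun a _ ξ hξ => ?_, fun ξ η => pstar_tLin_mul_tLin G ξ η,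
    fun b hb ξ ζ d hζ => ?_⟩
  · have hae : tc G ξ = aElem G a * eElem G := by
      rw [aElem_mul_eElem, ← hξ]
      rfl
    refine ⟨hae, ?_⟩
    rw [mul_assoc, ← hae]
    exact (one_sub_eElem_mul_tLin G ξ.2).symm
  · change tLin G ζ = b * tLin G ξ * dElem G d
    rw [mul_tLin_mul_dElem G (snd_mem_rightLinear_of_mem_Bset G hb), hζ]

theorem stmt_4 {D A : Type u} [CStarAlgebra D] [CStarAlgebra A] (ι : D →⋆ₐ[ℂ] A)
    (hι : Function.Injective ι) (E : CondExp D A ι) (hE : E.Nondeg)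
    (X : Type v) [NormedAddCommGroup X] [NormedSpace ℂ X] [CompleteSpace X]
    (G : GNSRep ι E X) :
    ∃ tc : Xc G →ₗ[ℂ] A × (X →L[ℂ] X),
      -- `t°` is isometric
      (∀ ξ : Xc G, ‖tc ξ‖ = ‖(ξ : X)‖) ∧
      -- `t°` maps into `(1-e)𝓑e`
      (∀ ξ : Xc G, ∃ z ∈ calB G, tc ξ = (1 - eElem G) * z * eElem G) ∧
      -- `t°(aξ₀) = ae = (1-e)ae` for `a ∈ A° = ker E`
      (∀ (a : A), E.toMap a = 0 → ∀ ξ : Xc G, (ξ : X) = G.rep.act a G.cyc →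
        tc ξ = aElem G a * eElem G ∧
        tc ξ = (1 - eElem G) * aElem G a * eElem G) ∧
      -- `t°(ξ)* t°(η) = ⟨ξ, η⟩ e`
      (∀ ξ η : Xc G,
        pstar G (tc ξ) * tc η = dElem G (G.mod.inner (ξ : X) (η : X)) * eElem G) ∧
      -- `t°(b ξ d) = b t°(ξ) d` for `b ∈ B` (acting on `X°` via `A ⊕ L(X°) → L(X°)`)
      (∀ b ∈ Bset G, ∀ (ξ ζ : Xc G) (d : D),
        (ζ : X) = G.mod.rsmul (b.2 (ξ : X)) d → tc ζ = b * tc ξ * dElem G d) :=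
  stmt_4_general ι E X G
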